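/- Let α ≥ 2 be an integer, let p, q be distributions on A = {1,…,k} with q_i > 0 for every i, let n ≥ 1 be an integer, and let N_1,…,N_k be independent Poisson random variables with N_i having mean n·p_i. Then the estimator X = n^{−α}·Σ_{i=1}^k q_i^{1−α}·N_i^{α̲} satisfies Var[X] ≤ Σ_{r=0}^{α−1} binom(α,r)·α^{α−r}·n^{r−α}·Σ_{i=1}^k p_i^{α+r} q_i^{2−2α}. -/

import Mathlib

open Finset Real

/-- `p` is a probability distribution on `Fin k`. -/
def IsDist {k : ℕ} (p : Fin k → ℝ) : Prop := (∀ i, 0 ≤ p i) ∧ ∑ i, p i = 1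

/-- Probability mass function of a Poisson random variable with mean `l`. -/
noncomputable def poissonPMF (l : ℝ) (j : ℕ) : ℝ :=
  Real.exp (-l) * l ^ j / (Nat.factorial j)

/-- Expectation of `g` under `k` independent Poisson random variables with
means `lam i`. -/
noncomputable def poissonE {k : ℕ} (lam : Fin k → ℝ) (g : (Fin k → ℕ) → ℝ) : ℝ :=
  ∑' ν : Fin k → ℕ, (∏ i, poissonPMF (lam i) (ν i)) * g ν

/-! Under independent Poisson sampling the falling factorials `N_i^{α̲}` are uncorrelated, so
`Var X = ∑ i, c_i² Var N_i^{α̲}` with `c_i = n^{-α} q_i^{1-α}`. Shifting the Poisson series by `α`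
(and, for the second moment, Chu–Vandermonde for falling factorials) gives `E N^{α̲} = λ^α` and
`E (N^{α̲})² = ∑_{r ≤ α} C(α,r) α^{(α-r)̲} λ^{α+r}`, whose `r = α` term is `(E N^{α̲})²`.
With `λ_i = n p_i` and `α^{(α-r)̲} ≤ α^{α-r}` this is the claimed bound. -/

open scoped Nat

lemma poissonPMF_nonneg {l : ℝ} (hl : 0 ≤ l) (j : ℕ) : 0 ≤ poissonPMF l j := by
  unfold poissonPMF; positivity

lemma hasSum_poissonPMF (l : ℝ) : HasSum (poissonPMF l) 1 := by
  have h := (NormedSpace.expSeries_div_hasSum_exp l).mul_left (Real.exp (-l))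
  rw [← Real.exp_eq_exp_ℝ, ← Real.exp_add, neg_add_cancel, Real.exp_zero] at h
  exact (funext fun j => mul_div_assoc _ _ _ : poissonPMF l = _) ▸ h

lemma poissonPMF_add_mul_descFactorial (l : ℝ) (m β : ℕ) :
    poissonPMF l (m + β) * (m + β).descFactorial β = l ^ β * poissonPMF l m := by
  have hfact : (m ! : ℝ) * (m + β).descFactorial β = (m + β)! := by
    exact_mod_cast Nat.add_sub_cancel m β ▸ Nat.factorial_mul_descFactorial (Nat.le_add_left β m)
  unfold poissonPMF
  field_simp
  rw [← hfact, pow_add]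
  ring

lemma hasSum_poissonPMF_mul_descFactorial (l : ℝ) (β : ℕ) :
    HasSum (fun m => poissonPMF l m * m.descFactorial β) (l ^ β) := by
  rw [← hasSum_nat_add_iff' β]
  have hvanish : ∑ m ∈ range β, poissonPMF l m * (m.descFactorial β : ℝ) = 0 :=
    sum_eq_zero fun m hm => by simp [Nat.descFactorial_eq_zero_iff_lt.mpr (mem_range.mp hm)]
  simpa only [hvanish, sub_zero, poissonPMF_add_mul_descFactorial, mul_one]
    using (hasSum_poissonPMF l).mul_left (l ^ β)

lemma Nat.descFactorial_add (m n k : ℕ) :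
    (m + n).descFactorial k =
      ∑ ij ∈ antidiagonal k, k.choose ij.1 * (m.descFactorial ij.1 * n.descFactorial ij.2) := by
  have h := Ring.descPochhammer_smeval_add (R := ℤ) (r := m) (s := n) k (Commute.all _ _)
  simp only [← Nat.cast_add, Polynomial.descPochhammer_smeval_eq_descFactorial] at h
  exact_mod_cast h

lemma hasSum_poissonPMF_mul_descFactorial_sq (l : ℝ) (α : ℕ) :
    HasSum (fun m => poissonPMF l m * (m.descFactorial α : ℝ) ^ 2)
      ((l ^ α) ^ 2 + ∑ r ∈ range α, α.choose r * α.descFactorial (α - r) * l ^ (α + r)) := by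
  rw [← hasSum_nat_add_iff' α]
  have hvanish : ∑ m ∈ range α, poissonPMF l m * (m.descFactorial α : ℝ) ^ 2 = 0 :=
    sum_eq_zero fun m hm => by simp [Nat.descFactorial_eq_zero_iff_lt.mpr (mem_range.mp hm)]
  have hshift (m : ℕ) : poissonPMF l (m + α) * ((m + α).descFactorial α : ℝ) ^ 2 =
      ∑ ij ∈ antidiagonal α, (α.choose ij.1 * α.descFactorial ij.2 * l ^ α) *
        (poissonPMF l m * m.descFactorial ij.1) := by
    rw [sq, ← mul_assoc, poissonPMF_add_mul_descFactorial, Nat.descFactorial_add, Nat.cast_sum,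
      mul_sum]
    refine sum_congr rfl fun ij _ => ?_
    push_cast
    ring
  simp only [hvanish, sub_zero, hshift]
  have hvalue : ∑ ij ∈ antidiagonal α, α.choose ij.1 * α.descFactorial ij.2 * l ^ α * l ^ ij.1 =
      (l ^ α) ^ 2 + ∑ r ∈ range α, α.choose r * α.descFactorial (α - r) * l ^ (α + r) := by
    rw [Nat.sum_antidiagonal_eq_sum_range_succ_mk, sum_range_succ, add_comm]
    congr 1
    · simp [sq]
    · exact sum_congr rfl fun r _ => by dsimp only; ring
  rw [← hvalue]
  exact hasSum_sum fun ij _ => (hasSum_poissonPMF_mul_descFactorial l ij.1).mul_left _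

lemma hasSum_fin_pi_prod_of_nonneg {β : Type*} {k : ℕ} {f : Fin k → β → ℝ} {a : Fin k → ℝ}
    (hf : ∀ i, HasSum (f i) (a i)) (hf0 : ∀ i, 0 ≤ f i) :
    HasSum (fun ν : Fin k → β => ∏ i, f i (ν i)) (∏ i, a i) := by
  induction k with
  | zero => simp
  | succ k ih =>
    have htail := ih (fun i => hf i.succ) (fun i => hf0 i.succ)
    have hcons : (fun x : β × (Fin k → β) => f 0 x.1 * ∏ i, f i.succ (x.2 i)) ∘
        (Fin.consEquiv fun _ => β).symm = fun ν => ∏ i, f i (ν i) := by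
      ext ν
      simp [Fin.consEquiv, Fin.prod_univ_succ, Fin.tail]
    obtain ⟨u, hu⟩ := (hf 0).summable.mul_of_nonneg htail.summable (hf0 0)
      fun ν => prod_nonneg fun i _ => hf0 i.succ (ν i)
    rw [Fin.prod_univ_succ, (hf 0).mul_eq htail hu, ← hcons]
    exact (Fin.consEquiv fun _ => β).symm.hasSum_iff.mpr hu

section IndependentPoisson

variable {k : ℕ} {lam : Fin k → ℝ}

lemma hasSum_poissonPMF_prod_mul_prod (hlam : 0 ≤ lam) {u : Fin k → ℕ → ℝ} (hu : 0 ≤ u)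
    {a : Fin k → ℝ} (h : ∀ i, HasSum (fun m => poissonPMF (lam i) m * u i m) (a i)) :
    HasSum (fun ν : Fin k → ℕ => (∏ i, poissonPMF (lam i) (ν i)) * ∏ i, u i (ν i)) (∏ i, a i) := by
  simpa only [prod_mul_distrib] using
    hasSum_fin_pi_prod_of_nonneg h fun i m => mul_nonneg (poissonPMF_nonneg (hlam i) m) (hu i m)

lemma hasSum_poissonPMF_prod_mul_apply (hlam : 0 ≤ lam) (i : Fin k) {g : ℕ → ℝ} (hg : 0 ≤ g)
    {a : ℝ} (h : HasSum (fun m => poissonPMF (lam i) m * g m) a) :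
    HasSum (fun ν : Fin k → ℕ => (∏ l, poissonPMF (lam l) (ν l)) * g (ν i)) a := by
  have := hasSum_poissonPMF_prod_mul_prod hlam (u := fun l m => if l = i then g m else 1)
    (a := fun l => if l = i then a else 1)
    (fun _ m => ite_nonneg (hg m) zero_le_one)
    (fun l => by
      split_ifs with hl
      · exact hl ▸ h
      · simpa using hasSum_poissonPMF (lam l))
  simpa only [prod_ite_eq', mem_univ, if_true] using this

lemma hasSum_poissonPMF_prod_mul_apply_mul_apply (hlam : 0 ≤ lam) {i j : Fin k} (hij : i ≠ j)
    {g h : ℕ → ℝ} (hg : 0 ≤ g) (hh : 0 ≤ h) {a b : ℝ}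
    (hga : HasSum (fun m => poissonPMF (lam i) m * g m) a)
    (hhb : HasSum (fun m => poissonPMF (lam j) m * h m) b) :
    HasSum (fun ν : Fin k → ℕ => (∏ l, poissonPMF (lam l) (ν l)) * (g (ν i) * h (ν j)))
      (a * b) := by
  have := hasSum_poissonPMF_prod_mul_prod hlam
    (u := fun l m => (if l = i then g m else 1) * (if l = j then h m else 1))
    (a := fun l => (if l = i then a else 1) * (if l = j then b else 1))
    (fun _ m => mul_nonneg (ite_nonneg (hg m) zero_le_one) (ite_nonneg (hh m) zero_le_one))
    (fun l => by
      by_cases hli : l = i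
      · subst hli; simpa [hij] using hga
      by_cases hlj : l = j
      · subst hlj; simpa [hli] using hhb
      simpa [hli, hlj] using hasSum_poissonPMF (lam l))
  simpa only [prod_mul_distrib, prod_ite_eq', mem_univ, if_true] using this

lemma hasSum_poissonPMF_prod_mul_descFactorial (hlam : 0 ≤ lam) (α : ℕ) (i : Fin k) :
    HasSum (fun ν : Fin k → ℕ => (∏ l, poissonPMF (lam l) (ν l)) * (ν i).descFactorial α)
      (lam i ^ α) :=
  hasSum_poissonPMF_prod_mul_apply (g := fun m => (m.descFactorial α : ℝ)) hlam i
    (fun _ => Nat.cast_nonneg _)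
    (hasSum_poissonPMF_mul_descFactorial (lam i) α)

lemma hasSum_poissonPMF_prod_mul_descFactorial_mul (hlam : 0 ≤ lam) (α : ℕ) (i j : Fin k) :
    HasSum (fun ν : Fin k → ℕ => (∏ l, poissonPMF (lam l) (ν l)) *
        ((ν i).descFactorial α * (ν j).descFactorial α : ℝ))
      (lam i ^ α * lam j ^ α +
        if i = j then ∑ r ∈ range α, α.choose r * α.descFactorial (α - r) * lam i ^ (α + r)
        else 0) := by
  rcases eq_or_ne i j with rfl | hij
  · simpa only [← sq, if_true] using hasSum_poissonPMF_prod_mul_apply hlam i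
      (fun _ => sq_nonneg _) (hasSum_poissonPMF_mul_descFactorial_sq (lam i) α)
  · simpa only [hij, if_false, add_zero] using hasSum_poissonPMF_prod_mul_apply_mul_apply hlam hij
      (fun _ => Nat.cast_nonneg _) (fun _ => Nat.cast_nonneg _)
      (hasSum_poissonPMF_mul_descFactorial (lam i) α)
      (hasSum_poissonPMF_mul_descFactorial (lam j) α)

end IndependentPoisson

section Uncorrelated

variable {ι κ : Type*} [Fintype κ] {w : ι → ℝ} {Y : κ → ι → ℝ} {m : κ → ℝ}

lemma hasSum_mul_sum (hY : ∀ i, HasSum (fun x => w x * Y i x) (m i)) (c : κ → ℝ) :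
    HasSum (fun x => w x * ∑ i, c i * Y i x) (∑ i, c i * m i) := by
  simp only [mul_sum, mul_left_comm (w _)]
  exact hasSum_sum fun i _ => (hY i).mul_left (c i)

lemma hasSum_mul_sum_sq_of_uncorrelated [DecidableEq κ] {v : κ → ℝ}
    (hY : ∀ i j, HasSum (fun x => w x * (Y i x * Y j x)) (m i * m j + if i = j then v i else 0))
    (c : κ → ℝ) :
    HasSum (fun x => w x * (∑ i, c i * Y i x) ^ 2) ((∑ i, c i * m i) ^ 2 + ∑ i, c i ^ 2 * v i) := by
  have hsq (x : ι) : w x * (∑ i, c i * Y i x) ^ 2 =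
      ∑ i, ∑ j, c i * c j * (w x * (Y i x * Y j x)) := by
    rw [sq, sum_mul_sum, mul_sum]
    refine sum_congr rfl fun i _ => ?_
    rw [mul_sum]
    exact sum_congr rfl fun j _ => by ring
  have hvalue : (∑ i, c i * m i) ^ 2 + ∑ i, c i ^ 2 * v i =
      ∑ i, ∑ j, c i * c j * (m i * m j + if i = j then v i else 0) := by
    simp only [mul_add, sum_add_distrib, mul_ite, mul_zero, sum_ite_eq, mem_univ, if_true, sq,
      sum_mul_sum]
    exact congrArg₂ _ (sum_congr rfl fun i _ => sum_congr rfl fun j _ => by ring)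
      (sum_congr rfl fun i _ => by ring)
  rw [funext hsq, hvalue]
  exact hasSum_sum fun i _ => hasSum_sum fun j _ => (hY i j).mul_left _

end Uncorrelated

lemma estimator_variance_term_le {α r : ℕ} (hr : r < α) (n : ℕ) {p q : ℝ} (hp : 0 ≤ p)
    (hq : 0 < q) :
    ((n : ℝ) ^ (-(α : ℝ)) * q ^ (1 - (α : ℝ))) ^ 2 *
        (α.choose r * α.descFactorial (α - r) * (n * p) ^ (α + r)) ≤
      α.choose r * (α : ℝ) ^ ((α : ℝ) - r) * (n : ℝ) ^ ((r : ℝ) - α) *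
        (p ^ ((α : ℝ) + r) * q ^ (2 - 2 * (α : ℝ))) := by
  have hn : (0 : ℝ) ≤ n := n.cast_nonneg
  have hexp : -(α : ℝ) * 2 + ((α + r : ℕ) : ℝ) = r - α := by push_cast; ring
  have hnpow :
      (n : ℝ) ^ (-(α : ℝ) * 2) * (n : ℝ) ^ ((α + r : ℕ) : ℝ) = (n : ℝ) ^ ((r : ℝ) - α) := by
    rw [← Real.rpow_add' hn (by rw [hexp]; exact sub_ne_zero.mpr (by exact_mod_cast hr.ne)), hexp]
  have hpow : ((n : ℝ) ^ (-(α : ℝ)) * q ^ (1 - (α : ℝ))) ^ 2 * (n * p) ^ (α + r) =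
      (n : ℝ) ^ ((r : ℝ) - α) * (p ^ ((α : ℝ) + r) * q ^ (2 - 2 * (α : ℝ))) := by
    rw [mul_pow, mul_pow, ← Real.rpow_mul_natCast hn, ← Real.rpow_mul_natCast hq.le,
      ← Real.rpow_natCast (n : ℝ), ← Real.rpow_natCast p, ← hnpow]
    push_cast
    ring_nf
  have hdf : (α.descFactorial (α - r) : ℝ) ≤ (α : ℝ) ^ ((α : ℝ) - r) := by
    rw [← Nat.cast_sub hr.le, Real.rpow_natCast]
    exact_mod_cast Nat.descFactorial_le_pow α (α - r)
  calc ((n : ℝ) ^ (-(α : ℝ)) * q ^ (1 - (α : ℝ))) ^ 2 *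
        (α.choose r * α.descFactorial (α - r) * (n * p) ^ (α + r))
      = α.descFactorial (α - r) * (α.choose r * ((n : ℝ) ^ ((r : ℝ) - α) *
          (p ^ ((α : ℝ) + r) * q ^ (2 - 2 * (α : ℝ))))) := by rw [← hpow]; ring
    _ ≤ (α : ℝ) ^ ((α : ℝ) - r) * (α.choose r * ((n : ℝ) ^ ((r : ℝ) - α) *
          (p ^ ((α : ℝ) + r) * q ^ (2 - 2 * (α : ℝ))))) := by gcongr
    _ = _ := by ring

theorem poissonized_estimator_variance_general (α : ℕ) (k : ℕ)
    (p q : Fin k → ℝ) (hp : IsDist p) (hqpos : ∀ i, 0 < q i)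
    (n : ℕ) :
    poissonE (fun i => (n : ℝ) * p i)
        (fun ν => ((n : ℝ) ^ (-(α : ℝ)) *
          ∑ i, q i ^ (1 - (α : ℝ)) * ((ν i).descFactorial α : ℝ)) ^ 2) -
      (poissonE (fun i => (n : ℝ) * p i)
        (fun ν => (n : ℝ) ^ (-(α : ℝ)) *
          ∑ i, q i ^ (1 - (α : ℝ)) * ((ν i).descFactorial α : ℝ))) ^ 2
    ≤ ∑ r ∈ Finset.range α, (α.choose r : ℝ) * (α : ℝ) ^ ((α : ℝ) - r) *
        (n : ℝ) ^ ((r : ℝ) - α) *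
        ∑ i, p i ^ ((α : ℝ) + r) * q i ^ (2 - 2 * (α : ℝ)) := by
  have hlam : 0 ≤ fun i => (n : ℝ) * p i := fun i => mul_nonneg n.cast_nonneg (hp.1 i)
  set c : Fin k → ℝ := fun i => (n : ℝ) ^ (-(α : ℝ)) * q i ^ (1 - (α : ℝ))
  have hX (ν : Fin k → ℕ) : (n : ℝ) ^ (-(α : ℝ)) *
      ∑ i, q i ^ (1 - (α : ℝ)) * ((ν i).descFactorial α : ℝ) =
        ∑ i, c i * (ν i).descFactorial α := by
    simp only [c, mul_sum, mul_assoc]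
  have hmean := hasSum_mul_sum (hasSum_poissonPMF_prod_mul_descFactorial hlam α) c
  have hsq := hasSum_mul_sum_sq_of_uncorrelated
    (hasSum_poissonPMF_prod_mul_descFactorial_mul hlam α) c
  simp only [poissonE, hX]
  rw [hmean.tsum_eq, hsq.tsum_eq, add_sub_cancel_left]
  simp only [mul_sum]
  rw [sum_comm]
  refine sum_le_sum fun r hr => sum_le_sum fun i _ => ?_
  exact estimator_variance_term_le (mem_range.mp hr) n (hp.1 i) (hqpos i)

/-- variance bound for the bias-corrected power sum estimator
under Poisson sampling. -/
theorem poissonized_estimator_variance (α : ℕ) (hα : 2 ≤ α) (k : ℕ)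
    (p q : Fin k → ℝ) (hp : IsDist p) (hq : IsDist q) (hqpos : ∀ i, 0 < q i)
    (n : ℕ) (hn : 1 ≤ n) :
    poissonE (fun i => (n : ℝ) * p i)
        (fun ν => ((n : ℝ) ^ (-(α : ℝ)) *
          ∑ i, q i ^ (1 - (α : ℝ)) * ((ν i).descFactorial α : ℝ)) ^ 2) -
      (poissonE (fun i => (n : ℝ) * p i)
        (fun ν => (n : ℝ) ^ (-(α : ℝ)) *
          ∑ i, q i ^ (1 - (α : ℝ)) * ((ν i).descFactorial α : ℝ))) ^ 2
    ≤ ∑ r ∈ Finset.range α, (α.choose r : ℝ) * (α : ℝ) ^ ((α : ℝ) - r) *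
        (n : ℝ) ^ ((r : ℝ) - α) *
        ∑ i, p i ^ ((α : ℝ) + r) * q i ^ (2 - 2 * (α : ℝ)) :=
  poissonized_estimator_variance_general α k p q hp hqpos n
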